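/- For every real t, h((1 − cos t)/2) + h((1 − sin t)/2) ≥ 1, where h is the binary entropy function h(q) := −q log₂ q − (1−q) log₂(1−q) (with h(0) = h(1) = 0); equality holds at t = 0. -/

import Mathlib

noncomputable section

/-- The base-2 binary entropy function `h(q) = −q log₂ q − (1−q) log₂ (1−q)`
(with the convention `0 · log₂ 0 = 0`, automatic in Lean). -/
def binEnt (q : ℝ) : ℝ := -q * Real.logb 2 q - (1 - q) * Real.logb 2 (1 - q)

/-!
Writing `p = (1 - cos t) / 2` gives `4 p (1 - p) = sin² t`, and likewise with `cos` and `sin`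
exchanged, so it suffices to prove `h(p) ≥ 4 p (1 - p)` on `[0, 1]`. For the natural-log entropy
`H = h · log 2` this says that `g(p) = H(p) - 4 log 2 · p (1 - p)` is nonnegative. Its second
derivative `8 log 2 - 1 / (p (1 - p))` vanishes where `p (1 - p) = 1 / (8 log 2)`, at `p₀` and
`1 - p₀` say: `g` is convex on `[p₀, 1 - p₀]` and symmetric about `1/2`, so there
`g(p) ≥ g(1/2) = 0`, and it is concave on `[0, p₀]` with `g(0) = 0 ≤ g(p₀)`.
-/

open Real Set

lemma exists_mul_one_sub_eq {c : ℝ} (hc₀ : 0 ≤ c) (hc₁ : c ≤ 4⁻¹) :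
    ∃ p ∈ Icc 0 2⁻¹, p * (1 - p) = c := by
  have hs : √(1 - 4 * c) ^ 2 = 1 - 4 * c := sq_sqrt (by linarith)
  have hs₁ : √(1 - 4 * c) ≤ 1 := sqrt_le_one.2 (by linarith)
  refine ⟨(1 - √(1 - 4 * c)) / 2, ⟨by linarith, by linarith [sqrt_nonneg (1 - 4 * c)]⟩, ?_⟩
  linear_combination (-1 / 4 : ℝ) * hs

namespace Real

variable {a p x y : ℝ}

lemma hasDerivAt_binEntropy_sub_mul_mul_one_sub (a : ℝ) (hp₀ : p ≠ 0) (hp₁ : p ≠ 1) :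
    HasDerivAt (fun p ↦ binEntropy p - a * (p * (1 - p)))
      (log (1 - p) - log p - a * (1 - 2 * p)) p := by
  refine ((hasDerivAt_binEntropy hp₀ hp₁).sub
    (((hasDerivAt_id' p).mul ((hasDerivAt_id' p).const_sub 1)).const_mul a)).congr_deriv ?_
  ring

lemma hasDerivAt_log_one_sub_sub_log_sub_mul (a : ℝ) (hp₀ : p ≠ 0) (hp₁ : p ≠ 1) :
    HasDerivAt (fun p ↦ log (1 - p) - log p - a * (1 - 2 * p))
      (2 * a - 1 / (p * (1 - p))) p := by
  have hp₁' : 1 - p ≠ 0 := sub_ne_zero.2 (Ne.symm hp₁)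
  refine ((((hasDerivAt_id' p).const_sub 1).log hp₁').sub ((hasDerivAt_id' p).log hp₀)).sub
    ((((hasDerivAt_id' p).const_mul 2).const_sub 1).const_mul a) |>.congr_deriv ?_
  field_simp
  ring

lemma concaveOn_binEntropy_sub_mul_mul_one_sub (hx : 0 ≤ x) (hy : y ≤ 1)
    (h : ∀ p ∈ Ioo x y, 2 * a * (p * (1 - p)) ≤ 1) :
    ConcaveOn ℝ (Icc x y) (fun p ↦ binEntropy p - a * (p * (1 - p))) := by
  refine concaveOn_of_hasDerivWithinAt2_nonpos (convex_Icc x y) (by fun_prop) ?_ ?_ ?_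
    (f' := fun p ↦ log (1 - p) - log p - a * (1 - 2 * p))
    (f'' := fun p ↦ 2 * a - 1 / (p * (1 - p)))
  all_goals
    rw [interior_Icc]
    intro p hp
    have hp₀ : 0 < p := hx.trans_lt hp.1
    have hp₁ : p < 1 := hp.2.trans_le hy
  · exact (hasDerivAt_binEntropy_sub_mul_mul_one_sub a hp₀.ne' hp₁.ne).hasDerivWithinAt
  · exact (hasDerivAt_log_one_sub_sub_log_sub_mul a hp₀.ne' hp₁.ne).hasDerivWithinAt
  · have hpos : 0 < p * (1 - p) := mul_pos hp₀ (sub_pos.2 hp₁)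
    rw [sub_nonpos, le_div_iff₀ hpos]
    linarith [h p hp]

lemma convexOn_binEntropy_sub_mul_mul_one_sub (hx : 0 ≤ x) (hy : y ≤ 1)
    (h : ∀ p ∈ Ioo x y, 1 ≤ 2 * a * (p * (1 - p))) :
    ConvexOn ℝ (Icc x y) (fun p ↦ binEntropy p - a * (p * (1 - p))) := by
  refine convexOn_of_hasDerivWithinAt2_nonneg (convex_Icc x y) (by fun_prop) ?_ ?_ ?_
    (f' := fun p ↦ log (1 - p) - log p - a * (1 - 2 * p))
    (f'' := fun p ↦ 2 * a - 1 / (p * (1 - p)))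
  all_goals
    rw [interior_Icc]
    intro p hp
    have hp₀ : 0 < p := hx.trans_lt hp.1
    have hp₁ : p < 1 := hp.2.trans_le hy
  · exact (hasDerivAt_binEntropy_sub_mul_mul_one_sub a hp₀.ne' hp₁.ne).hasDerivWithinAt
  · exact (hasDerivAt_log_one_sub_sub_log_sub_mul a hp₀.ne' hp₁.ne).hasDerivWithinAt
  · have hpos : 0 < p * (1 - p) := mul_pos hp₀ (sub_pos.2 hp₁)
    rw [sub_nonneg, div_le_iff₀ hpos]
    linarith [h p hp]

theorem four_mul_log_two_mul_mul_one_sub_le_binEntropy (hp₀ : 0 ≤ p) (hp₁ : p ≤ 1) :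
    4 * log 2 * (p * (1 - p)) ≤ binEntropy p := by
  set g : ℝ → ℝ := fun p ↦ binEntropy p - 4 * log 2 * (p * (1 - p)) with hg
  suffices 0 ≤ g p by simpa [hg] using this
  have g_one_sub (q : ℝ) : g (1 - q) = g q := by simp only [hg, binEntropy_one_sub]; ring
  wlog hp : p ≤ 2⁻¹ generalizing p
  · rw [← g_one_sub]; exact this (by linarith) (by linarith) (by linarith)
  have hlog : 1 / 2 < log 2 := by linarith [log_two_gt_d9]
  obtain ⟨p₀, ⟨hp₀₀, hp₀₁⟩, hp₀c⟩ :=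
    exists_mul_one_sub_eq (c := (8 * log 2)⁻¹) (by positivity)
      (by rw [inv_le_inv₀ (by linarith) (by norm_num)]; linarith)
  have h8 : 8 * log 2 * (p₀ * (1 - p₀)) = 1 := by rw [hp₀c]; field_simp
  have hconv : ConvexOn ℝ (Icc p₀ (1 - p₀)) g :=
    convexOn_binEntropy_sub_mul_mul_one_sub hp₀₀ (by linarith) fun q hq ↦ by
      nlinarith [mul_nonneg (sub_nonneg.2 hq.1.le) (sub_nonneg.2 hq.2.le)]
  have hmid : ∀ q ∈ Icc p₀ (1 - p₀), 0 ≤ g q := by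
    intro q hq
    have h := hconv.2 (y := 1 - q) hq ⟨by linarith [hq.2], by linarith [hq.1]⟩
      (by norm_num : (0 : ℝ) ≤ 2⁻¹) (by norm_num : (0 : ℝ) ≤ 2⁻¹) (by norm_num)
    have hhalf : g 2⁻¹ = 0 := by simp only [hg, binEntropy_two_inv]; ring
    simp only [smul_eq_mul, g_one_sub] at h
    rw [show 2⁻¹ * q + 2⁻¹ * (1 - q) = (2⁻¹ : ℝ) by ring, hhalf] at h
    linarith
  rcases le_total p p₀ with hpp₀ | hp₀p
  · have hconc : ConcaveOn ℝ (Icc 0 p₀) g :=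
      concaveOn_binEntropy_sub_mul_mul_one_sub le_rfl (by linarith) fun q hq ↦ by
        nlinarith [mul_nonneg (sub_nonneg.2 hq.2.le) (by linarith [hq.2] : 0 ≤ 1 - p₀ - q)]
    have h := hconc.ge_on_segment (left_mem_Icc.2 hp₀₀) (right_mem_Icc.2 hp₀₀)
      (by rw [segment_eq_Icc hp₀₀]; exact ⟨hp₀, hpp₀⟩)
    have hzero : g 0 = 0 := by simp [hg]
    rw [hzero] at h
    exact (le_min le_rfl (hmid p₀ ⟨le_rfl, by linarith⟩)).trans h
  · exact hmid p ⟨hp₀p, by linarith⟩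

end Real

lemma binEnt_eq_binEntropy_div_log_two (q : ℝ) : binEnt q = binEntropy q / log 2 := by
  simp only [binEnt, binEntropy, logb, log_inv]
  ring

lemma four_mul_mul_one_sub_le_binEnt {p : ℝ} (hp₀ : 0 ≤ p) (hp₁ : p ≤ 1) :
    4 * (p * (1 - p)) ≤ binEnt p := by
  rw [binEnt_eq_binEntropy_div_log_two, le_div_iff₀ (log_pos one_lt_two)]
  linarith [four_mul_log_two_mul_mul_one_sub_le_binEntropy hp₀ hp₁]

/-- `h((1 − cos t)/2) + h((1 − sin t)/2) ≥ 1` for every real `t`,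
with equality at `t = 0`. -/
theorem binEnt_cos_sin_ge_one :
    (∀ t : ℝ, 1 ≤ binEnt ((1 - Real.cos t) / 2) + binEnt ((1 - Real.sin t) / 2)) ∧
    binEnt ((1 - Real.cos 0) / 2) + binEnt ((1 - Real.sin 0) / 2) = 1 := by
  constructor
  · intro t
    have hcos := four_mul_mul_one_sub_le_binEnt (p := (1 - cos t) / 2)
      (by linarith [cos_le_one t]) (by linarith [neg_one_le_cos t])
    have hsin := four_mul_mul_one_sub_le_binEnt (p := (1 - sin t) / 2)
      (by linarith [sin_le_one t]) (by linarith [neg_one_le_sin t])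
    linear_combination hcos + hsin + sin_sq_add_cos_sq t
  · simp [binEnt_eq_binEntropy_div_log_two, (log_pos one_lt_two).ne']

end
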